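/- Let ρ be a representation of H_n(q) on a finite-dimensional complex vector space V, and let 2 ≤ j ≤ n. Then every eigenvalue μ of the operator ρ(y_j) satisfies: μ is an eigenvalue of ρ(y_{j−1}), or μ = q² a for some eigenvalue a of ρ(y_{j−1}), or μ = q^{-2} a for some eigenvalue a of ρ(y_{j−1}). -/

import Mathlib

open FreeAlgebra in
/-- Defining relations of the A-type Hecke algebra `H_n(q)` on generators
`σ_1, …, σ_{n-1}` (generator `i : Fin (n-1)` represents `σ_{i+1}`). -/
inductive HeckeRel (n : ℕ) (q : ℂ) :
    FreeAlgebra ℂ (Fin (n - 1)) → FreeAlgebra ℂ (Fin (n - 1)) → Prop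
  | braid (i j : Fin (n - 1)) (h : (i : ℕ) + 1 = (j : ℕ)) :
      HeckeRel n q (ι ℂ i * ι ℂ j * ι ℂ i) (ι ℂ j * ι ℂ i * ι ℂ j)
  | comm (i j : Fin (n - 1)) (h : (i : ℕ) + 1 < (j : ℕ)) :
      HeckeRel n q (ι ℂ i * ι ℂ j) (ι ℂ j * ι ℂ i)
  | quad (i : Fin (n - 1)) :
      HeckeRel n q (ι ℂ i * ι ℂ i) (1 + (q - q⁻¹) • ι ℂ i)

/-- The A-type Hecke algebra `H_n(q)`. -/
abbrev HeckeAlgebra (n : ℕ) (q : ℂ) := RingQuot (HeckeRel n q)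

/-- The generator `σ_k` (1-based: valid for `1 ≤ k ≤ n-1`; junk value `1` otherwise). -/
noncomputable def heckeGen (n : ℕ) (q : ℂ) (k : ℕ) : HeckeAlgebra n q :=
  if h : k - 1 < n - 1 then RingQuot.mkAlgHom ℂ (HeckeRel n q) (FreeAlgebra.ι ℂ ⟨k - 1, h⟩)
  else 1

/-- The Jucys–Murphy elements, 1-based: `jm 1 = 1`, `jm (i+1) = σ_i * jm i * σ_i`. -/
noncomputable def jm (n : ℕ) (q : ℂ) : ℕ → HeckeAlgebra n q
  | 0 => 1
  | 1 => 1
  | (i + 2) => heckeGen n q (i + 1) * jm n q (i + 1) * heckeGen n q (i + 1)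

/-!
Write `σ = σ_{j-1}` and `y = y_{j-1}`, so that `y_j = σ y σ`. The braid relations show, by
induction on `j`, that `y` commutes with `σ y σ`; hence `ρ(y_j)` and `ρ(y)` have a common
eigenvector `v`, with eigenvalues `μ` and `a`. If `ρ(σ) v = t v`, the quadratic relation forces
`t ∈ {q, -q⁻¹}` and `μ = t² a`. Otherwise `ρ(y)` is triangular on `span {v, ρ(σ) v}` with
diagonal `(a, μ)`, because `ρ(y) ρ(σ) = (ρ(σ) - (q - q⁻¹)) ρ(y_j)`; so `μ` is an eigenvalue of `ρ(y)`.
-/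

theorem Commute.mul_mul_conj_of_braid {M : Type*} [Monoid M] {s t y : M}
    (hst : s * t * s = t * s * t) (hty : Commute t y) (hy : Commute y (s * y * s)) :
    Commute (s * y * s) (t * (s * y * s) * t) := by
  have hst' (c : M) : s * (t * (s * c)) = t * (s * (t * c)) := by
    simp only [← mul_assoc, hst]
  have hst₀ : s * (t * s) = t * (s * t) := by rw [← mul_assoc, hst, mul_assoc]
  have hy' (c : M) : y * (s * (y * (s * c))) = s * (y * (s * (y * c))) := by
    simp only [← mul_assoc, hy.eq]
  rw [commute_iff_eq]
  calc s * y * s * (t * (s * y * s) * t)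
      = s * (y * (s * (t * (s * (y * (s * t)))))) := by simp only [mul_assoc]
    _ = s * (y * (t * (s * (t * (y * (s * t)))))) := by rw [hst']
    _ = s * (t * (y * (s * (y * (t * (s * t)))))) := by
        rw [← hty.left_comm, hty.left_comm (s * t)]
    _ = s * (t * (y * (s * (y * (s * (t * s)))))) := by rw [← hst₀]
    _ = s * (t * (s * (y * (s * (y * (t * s)))))) := by rw [hy']
    _ = t * (s * (t * (y * (s * (y * (t * s)))))) := by rw [hst']
    _ = t * (s * (y * (t * (s * (t * (y * s)))))) := by
        rw [← hty.left_comm s, hty.left_comm (s * (t * (y * s)))]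
    _ = t * (s * (y * (s * (t * (s * (y * s)))))) := by rw [← hst']
    _ = t * (s * y * s) * t * (s * y * s) := by simp only [mul_assoc]

namespace Module.End

variable {K V : Type*} [Field K] [AddCommGroup V] [Module K V]

theorem exists_hasEigenvector_of_commute [IsAlgClosed K] [FiniteDimensional K V]
    {f g : End K V} (hfg : Commute f g) {μ : K} (hμ : f.HasEigenvalue μ) :
    ∃ a v, f.HasEigenvector μ v ∧ g.HasEigenvector a v := by
  have hmaps : ∀ x ∈ f.eigenspace μ, g x ∈ f.eigenspace μ :=
    fun x hx => mapsTo_genEigenspace_of_comm hfg μ 1 hx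
  have : Nontrivial (f.eigenspace μ) := Submodule.nontrivial_iff_ne_bot.mpr hμ
  obtain ⟨a, ha⟩ := exists_eigenvalue (g.restrict hmaps)
  obtain ⟨⟨v, hv⟩, hgv⟩ := ha.exists_hasEigenvector
  have hv0 : v ≠ 0 := by simpa using hgv.2
  exact ⟨a, v, ⟨hv, hv0⟩, mem_eigenspace_iff.mpr (congrArg Subtype.val hgv.apply_eq_smul), hv0⟩

theorem hasEigenvalue_of_apply_eq_smul_add_smul {f : End K V} {a μ b : K} {v w : V}
    (hv : f.HasEigenvector a v) (hw : f w = μ • w + b • v) (hwv : w ∉ K ∙ v) :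
    f.HasEigenvalue μ := by
  by_cases hμa : μ = a
  · exact hμa ▸ hasEigenvalue_of_hasEigenvector hv
  refine hasEigenvalue_of_hasEigenvector (x := w + (b / (μ - a)) • v) ⟨?_, ?_⟩
  · have hμa' : μ - a ≠ 0 := sub_ne_zero.mpr hμa
    rw [mem_eigenspace_iff, map_add, map_smul, hw, hv.apply_eq_smul, smul_add, smul_smul,
      smul_smul, add_assoc, ← add_smul]
    congr 2
    field_simp
    ring
  · intro h
    exact hwv (Submodule.mem_span_singleton.mpr ⟨-(b / (μ - a)), by
      rw [neg_smul, neg_eq_iff_add_eq_zero, add_comm, h]⟩)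

theorem eq_or_eq_neg_inv_of_mul_self_eq {q t : K} (hq : q ≠ 0) (ht : t * t = 1 + (q - q⁻¹) * t) :
    t = q ∨ t = -q⁻¹ := by
  have : (t - q) * (t + q⁻¹) = 0 := by
    linear_combination ht - mul_inv_cancel₀ hq
  rcases mul_eq_zero.mp this with h | h
  · exact .inl (sub_eq_zero.mp h)
  · exact .inr (eq_neg_of_add_eq_zero_left h)

theorem hasEigenvalue_or_of_hasEigenvalue_mul_mul [IsAlgClosed K] [FiniteDimensional K V]
    {A B : End K V} {q μ : K} (hq : q ≠ 0) (hA : A * A = 1 + (q - q⁻¹) • A)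
    (hB : Commute B (A * B * A)) (hμ : (A * B * A).HasEigenvalue μ) :
    B.HasEigenvalue μ ∨ (∃ a, B.HasEigenvalue a ∧ μ = q ^ 2 * a) ∨
      (∃ a, B.HasEigenvalue a ∧ μ = q⁻¹ ^ 2 * a) := by
  obtain ⟨a, v, hMv, hBv⟩ := exists_hasEigenvector_of_commute hB.symm hμ
  have hBa : B.HasEigenvalue a := hasEigenvalue_of_hasEigenvector hBv
  by_cases hAv : A v ∈ K ∙ v
  · obtain ⟨t, ht⟩ := Submodule.mem_span_singleton.mp hAv
    have ht2 : t * t = 1 + (q - q⁻¹) * t := smul_left_injective K hBv.2 <| by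
      calc (t * t) • v = (A * A) v := by rw [mul_apply, ← ht, map_smul, ← ht, smul_smul]
        _ = (1 + (q - q⁻¹) * t) • v := by simp [hA, ← ht, add_smul, mul_smul]
    have hμt : μ = t * t * a := smul_left_injective K hBv.2 <| by
      calc μ • v = (A * B * A) v := hMv.apply_eq_smul.symm
        _ = (t * t * a) • v := by
          simp only [mul_apply, ← ht, map_smul, hBv.apply_eq_smul, smul_smul]; ring_nf
    rcases eq_or_eq_neg_inv_of_mul_self_eq hq ht2 with rfl | rfl
    · exact .inr (.inl ⟨a, hBa, by rw [hμt]; ring⟩)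
    · exact .inr (.inr ⟨a, hBa, by rw [hμt]; ring⟩)
  · have hBA : B * A = (A - (q - q⁻¹) • 1) * (A * B * A) := by
      have hinv : (A - (q - q⁻¹) • 1) * A = 1 := by
        rw [sub_mul, hA, smul_mul_assoc, one_mul, add_sub_cancel_right]
      rw [← mul_assoc, ← mul_assoc, hinv, one_mul]
    refine .inl (hasEigenvalue_of_apply_eq_smul_add_smul hBv (b := -((q - q⁻¹) * μ)) ?_ hAv)
    rw [← mul_apply, hBA, mul_apply, hMv.apply_eq_smul]
    simp [smul_smul, mul_comm, sub_eq_add_neg]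

end Module.End

section Hecke

variable {n : ℕ} {q : ℂ}

theorem heckeGen_of_sub_one_lt {k : ℕ} (hk : k - 1 < n - 1) :
    heckeGen n q k = RingQuot.mkAlgHom ℂ (HeckeRel n q) (FreeAlgebra.ι ℂ ⟨k - 1, hk⟩) :=
  dif_pos hk

theorem heckeGen_mul_self {k : ℕ} (hk : k - 1 < n - 1) :
    heckeGen n q k * heckeGen n q k = 1 + (q - q⁻¹) • heckeGen n q k := by
  rw [heckeGen_of_sub_one_lt hk, ← map_mul,
    RingQuot.mkAlgHom_rel _ (HeckeRel.quad ⟨k - 1, hk⟩), map_add, map_one, map_smul]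

theorem heckeGen_braid {k : ℕ} (hk : 1 ≤ k) (hkn : k + 1 < n) :
    heckeGen n q k * heckeGen n q (k + 1) * heckeGen n q k
      = heckeGen n q (k + 1) * heckeGen n q k * heckeGen n q (k + 1) := by
  have hk₁ : k - 1 < n - 1 := by omega
  have hk₂ : k + 1 - 1 < n - 1 := by omega
  rw [heckeGen_of_sub_one_lt hk₁, heckeGen_of_sub_one_lt hk₂]
  simp only [← map_mul]
  exact RingQuot.mkAlgHom_rel _ (HeckeRel.braid _ _ (by simp only; omega))

theorem heckeGen_commute {k l : ℕ} (hk : 1 ≤ k) (hkl : k + 1 < l) :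
    Commute (heckeGen n q k) (heckeGen n q l) := by
  by_cases hl : l - 1 < n - 1
  · have hk' : k - 1 < n - 1 := by omega
    rw [commute_iff_eq, heckeGen_of_sub_one_lt hk', heckeGen_of_sub_one_lt hl,
      ← map_mul, ← map_mul]
    exact RingQuot.mkAlgHom_rel _ (HeckeRel.comm _ _ (by simp only; omega))
  · rw [show heckeGen n q l = 1 from dif_neg hl]
    exact Commute.one_right _

theorem jm_add_two (i : ℕ) :
    jm n q (i + 2) = heckeGen n q (i + 1) * jm n q (i + 1) * heckeGen n q (i + 1) :=
  rfl

theorem heckeGen_commute_jm {i k : ℕ} (hik : i < k) : Commute (heckeGen n q k) (jm n q i) := by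
  induction i using jm.induct with
  | case1 | case2 => exact Commute.one_right _
  | case3 i ih =>
    have hσ : Commute (heckeGen n q k) (heckeGen n q (i + 1)) :=
      (heckeGen_commute (by omega) (by omega)).symm
    rw [jm_add_two]
    exact (hσ.mul_right (ih (by omega))).mul_right hσ

theorem jm_commute_jm_succ {i : ℕ} (hi : i < n) : Commute (jm n q i) (jm n q (i + 1)) := by
  induction i using jm.induct with
  | case1 | case2 => exact Commute.one_left _
  | case3 i ih =>
    rw [jm_add_two (i + 1), jm_add_two i]
    exact Commute.mul_mul_conj_of_braid (heckeGen_braid (by omega) (by omega))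
      (heckeGen_commute_jm (by omega)) (ih (by omega))

end Hecke

theorem jm_eigenvalue_step_general (n : ℕ) (q : ℂ) (hq : q ≠ 0)
    (V : Type) [AddCommGroup V] [Module ℂ V] [FiniteDimensional ℂ V]
    (ρ : HeckeAlgebra n q →ₐ[ℂ] Module.End ℂ V) (j : ℕ) (hj2 : 2 ≤ j) (hjn : j ≤ n)
    (μ : ℂ) (hμ : Module.End.HasEigenvalue (ρ (jm n q j)) μ) :
    Module.End.HasEigenvalue (ρ (jm n q (j - 1))) μ ∨
    (∃ a : ℂ, Module.End.HasEigenvalue (ρ (jm n q (j - 1))) a ∧ μ = q ^ 2 * a) ∨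
    (∃ a : ℂ, Module.End.HasEigenvalue (ρ (jm n q (j - 1))) a ∧ μ = q⁻¹ ^ 2 * a) := by
  obtain ⟨i, rfl⟩ : ∃ i, j = i + 2 := ⟨j - 2, by omega⟩
  have hσ : ρ (heckeGen n q (i + 1)) * ρ (heckeGen n q (i + 1))
      = 1 + (q - q⁻¹) • ρ (heckeGen n q (i + 1)) := by
    rw [← map_mul, heckeGen_mul_self (by omega), map_add, map_one, map_smul]
  have hcomm := (jm_commute_jm_succ (n := n) (q := q) (i := i + 1) (by omega)).map ρ
  rw [jm_add_two, map_mul, map_mul] at hμ hcomm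
  exact Module.End.hasEigenvalue_or_of_hasEigenvalue_mul_mul hq hσ hcomm hμ

/-- in a finite-dimensional representation `ρ` of `H_n(q)`, every
eigenvalue of `ρ(y_j)` (`2 ≤ j ≤ n`) is an eigenvalue of `ρ(y_{j-1})`, or `q²` times one,
or `q⁻²` times one. -/
theorem jm_eigenvalue_step (n : ℕ) (q : ℂ) (hn : 1 ≤ n) (hq : q ≠ 0)
    (V : Type) [AddCommGroup V] [Module ℂ V] [FiniteDimensional ℂ V]
    (ρ : HeckeAlgebra n q →ₐ[ℂ] Module.End ℂ V) (j : ℕ) (hj2 : 2 ≤ j) (hjn : j ≤ n)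
    (μ : ℂ) (hμ : Module.End.HasEigenvalue (ρ (jm n q j)) μ) :
    Module.End.HasEigenvalue (ρ (jm n q (j - 1))) μ ∨
    (∃ a : ℂ, Module.End.HasEigenvalue (ρ (jm n q (j - 1))) a ∧ μ = q ^ 2 * a) ∨
    (∃ a : ℂ, Module.End.HasEigenvalue (ρ (jm n q (j - 1))) a ∧ μ = q⁻¹ ^ 2 * a) :=
  jm_eigenvalue_step_general n q hq V ρ j hj2 hjn μ hμ
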